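/- arXiv:math/0011157 — 2 statements merged into one kernel-verified Lean document; each statement's English description precedes it below -/
import Mathlib

section
/- Let ρ, λ ≥ 0 and ξ₁, ξ₂, ξ₃ ∈ ℝ with ξ = ξ₁ + ξ₂ + ξ₃. Then there is a constant c = c(ρ,λ) > 0 such that ⟨ξ₁⟩^ρ ≤ c ( ⟨ξ⟩^ρ + ⟨ξ₁ − ξ₂⟩^{ρ+λ}/⟨ξ₁ + ξ₂⟩^λ + ⟨ξ₁ − ξ₃⟩^{ρ+λ}/⟨ξ₁ + ξ₃⟩^λ ). -/
noncomputable def jb (x : ℝ) : ℝ := Real.sqrt (1 + x ^ 2)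

lemma jb_one_le (x : ℝ) : 1 ≤ jb x := by
  unfold jb
  nlinarith [Real.sq_sqrt (show (0:ℝ) ≤ 1 + x ^ 2 by positivity),
    Real.sqrt_nonneg (1 + x ^ 2)]

lemma jb_mono {x y : ℝ} (h : |x| ≤ |y|) : jb x ≤ jb y := by
  unfold jb
  exact Real.sqrt_le_sqrt (by nlinarith [sq_abs x, sq_abs y, abs_nonneg x])

lemma jb_neg (x : ℝ) : jb (-x) = jb x := by
  unfold jb; congr 1; ring

lemma jb_add_le (a b : ℝ) : jb (a + b) ≤ jb a + jb b := by
  have habs : |b| ≤ jb b := by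
    unfold jb
    rw [show |b| = Real.sqrt (b ^ 2) by rw [Real.sqrt_sq_eq_abs]]
    exact Real.sqrt_le_sqrt (by nlinarith)
  have h : jb (a + b) ≤ jb a + |b| := by
    rw [show jb a + |b| = Real.sqrt ((Real.sqrt (1 + a ^ 2) + |b|) ^ 2) by
      rw [Real.sqrt_sq (by positivity)]; rfl]
    refine Real.sqrt_le_sqrt ?_
    have h1 : a * b ≤ |b| * Real.sqrt (1 + a ^ 2) := by
      calc a * b ≤ |a| * |b| := by rw [← abs_mul]; exact le_abs_self _
        _ ≤ |b| * Real.sqrt (1 + a ^ 2) := by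
            rw [mul_comm]
            refine mul_le_mul_of_nonneg_left ?_ (abs_nonneg b)
            rw [show |a| = Real.sqrt (a ^ 2) by rw [Real.sqrt_sq_eq_abs]]
            exact Real.sqrt_le_sqrt (by nlinarith)
    have h2 : Real.sqrt (1 + a ^ 2) ^ 2 = 1 + a ^ 2 := Real.sq_sqrt (by positivity)
    have h3 : (|b|) ^ 2 = b ^ 2 := sq_abs b
    nlinarith
  linarith

lemma key (ρ lam : ℝ) (hρ : 0 ≤ ρ) (hlam : 0 ≤ lam) (a b d : ℝ)
    (ha : 1 ≤ a) (hb : 1 ≤ b) (hd : 1 ≤ d) (h1 : a ≤ 3 * b) (h2 : d ≤ 7 * b) :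
    a ^ ρ ≤ (3:ℝ) ^ ρ * 7 ^ lam * (b ^ (ρ + lam) / d ^ lam) := by
  have hb0 : (0:ℝ) < b := lt_of_lt_of_le one_pos hb
  have hd0 : (0:ℝ) < d := lt_of_lt_of_le one_pos hd
  have ha0 : (0:ℝ) ≤ a := le_trans zero_le_one ha
  have hA : a ^ ρ ≤ 3 ^ ρ * b ^ ρ := by
    rw [← Real.mul_rpow (by norm_num) hb0.le]
    exact Real.rpow_le_rpow ha0 h1 hρ
  have hD : d ^ lam ≤ 7 ^ lam * b ^ lam := by
    rw [← Real.mul_rpow (by norm_num) hb0.le]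
    exact Real.rpow_le_rpow hd0.le h2 hlam
  have hdl : (0:ℝ) < d ^ lam := Real.rpow_pos_of_pos hd0 lam
  rw [mul_div_assoc', le_div_iff₀ hdl]
  calc a ^ ρ * d ^ lam ≤ (3 ^ ρ * b ^ ρ) * (7 ^ lam * b ^ lam) := by
        apply mul_le_mul hA hD (Real.rpow_nonneg hd0.le lam) (by positivity)
    _ = 3 ^ ρ * 7 ^ lam * b ^ (ρ + lam) := by
        rw [Real.rpow_add hb0]; ring

/-- For `ρ, λ ≥ 0` there is `c = c(ρ,λ) > 0` such that whenever `ξ = ξ₁ + ξ₂ + ξ₃`,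
`⟨ξ₁⟩^ρ ≤ c (⟨ξ⟩^ρ + ⟨ξ₁−ξ₂⟩^{ρ+λ}/⟨ξ₁+ξ₂⟩^λ + ⟨ξ₁−ξ₃⟩^{ρ+λ}/⟨ξ₁+ξ₃⟩^λ)`. -/
theorem bracket_trilinear_bound (ρ lam : ℝ) (hρ : 0 ≤ ρ) (hlam : 0 ≤ lam) :
    ∃ c > (0 : ℝ), ∀ ξ ξ₁ ξ₂ ξ₃ : ℝ, ξ = ξ₁ + ξ₂ + ξ₃ →
      jb ξ₁ ^ ρ ≤ c * (jb ξ ^ ρ + jb (ξ₁ - ξ₂) ^ (ρ + lam) / jb (ξ₁ + ξ₂) ^ lam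
        + jb (ξ₁ - ξ₃) ^ (ρ + lam) / jb (ξ₁ + ξ₃) ^ lam) := by
  have h3p : (0:ℝ) < 3 ^ ρ := Real.rpow_pos_of_pos (by norm_num) ρ
  have hc1 : (1:ℝ) ≤ 7 ^ lam := Real.one_le_rpow (by norm_num) hlam
  refine ⟨3 ^ ρ * 7 ^ lam, by positivity, ?_⟩
  intro ξ ξ₁ ξ₂ ξ₃ hξ
  have h1A : 1 ≤ jb ξ := jb_one_le _
  have h1B : 1 ≤ jb (ξ₁ - ξ₂) := jb_one_le _
  have h1C : 1 ≤ jb (ξ₁ - ξ₃) := jb_one_le _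
  have h1D : 1 ≤ jb (ξ₁ + ξ₂) := jb_one_le _
  have h1E : 1 ≤ jb (ξ₁ + ξ₃) := jb_one_le _
  have h1 : 1 ≤ jb ξ₁ := jb_one_le _
  have hsum : jb ξ₁ ≤ jb ξ + jb (ξ₁ - ξ₂) + jb (ξ₁ - ξ₃) := by
    have h2 := jb_add_le (ξ + (ξ₁ - ξ₂)) (ξ₁ - ξ₃)
    have h3 := jb_add_le ξ (ξ₁ - ξ₂)
    rw [show ξ + (ξ₁ - ξ₂) + (ξ₁ - ξ₃) = 3 * ξ₁ by rw [hξ]; ring] at h2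
    have hmono : jb ξ₁ ≤ jb (3 * ξ₁) := by
      apply jb_mono
      rw [abs_mul, show |(3:ℝ)| = 3 by norm_num]
      nlinarith [abs_nonneg ξ₁]
    linarith
  have hT1 : (0:ℝ) ≤ jb ξ ^ ρ := Real.rpow_nonneg (by linarith) _
  have hT2 : (0:ℝ) ≤ jb (ξ₁ - ξ₂) ^ (ρ + lam) / jb (ξ₁ + ξ₂) ^ lam := by
    apply div_nonneg <;> exact Real.rpow_nonneg (by linarith) _
  have hT3 : (0:ℝ) ≤ jb (ξ₁ - ξ₃) ^ (ρ + lam) / jb (ξ₁ + ξ₃) ^ lam := by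
    apply div_nonneg <;> exact Real.rpow_nonneg (by linarith) _
  have hDm2 : jb (ξ₁ + ξ₂) ≤ 2 * jb ξ₁ + jb (ξ₁ - ξ₂) := by
    have h2 := jb_add_le (ξ₁ + ξ₁) (-(ξ₁ - ξ₂))
    have h3 := jb_add_le ξ₁ ξ₁
    rw [jb_neg, show ξ₁ + ξ₁ + -(ξ₁ - ξ₂) = ξ₁ + ξ₂ by ring] at h2
    linarith
  have hDm3 : jb (ξ₁ + ξ₃) ≤ 2 * jb ξ₁ + jb (ξ₁ - ξ₃) := by
    have h2 := jb_add_le (ξ₁ + ξ₁) (-(ξ₁ - ξ₃))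
    have h3 := jb_add_le ξ₁ ξ₁
    rw [jb_neg, show ξ₁ + ξ₁ + -(ξ₁ - ξ₃) = ξ₁ + ξ₃ by ring] at h2
    linarith
  have finish2 : jb (ξ₁ - ξ₂) ^ (ρ + lam) / jb (ξ₁ + ξ₂) ^ lam ≤
      jb ξ ^ ρ + jb (ξ₁ - ξ₂) ^ (ρ + lam) / jb (ξ₁ + ξ₂) ^ lam
        + jb (ξ₁ - ξ₃) ^ (ρ + lam) / jb (ξ₁ + ξ₃) ^ lam := by linarith
  have finish3 : jb (ξ₁ - ξ₃) ^ (ρ + lam) / jb (ξ₁ + ξ₃) ^ lam ≤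
      jb ξ ^ ρ + jb (ξ₁ - ξ₂) ^ (ρ + lam) / jb (ξ₁ + ξ₂) ^ lam
        + jb (ξ₁ - ξ₃) ^ (ρ + lam) / jb (ξ₁ + ξ₃) ^ lam := by linarith
  have case3 : jb (ξ₁ - ξ₂) ≤ jb (ξ₁ - ξ₃) → jb ξ ≤ jb (ξ₁ - ξ₃) →
      jb ξ₁ ^ ρ ≤ 3 ^ ρ * 7 ^ lam * (jb ξ ^ ρ + jb (ξ₁ - ξ₂) ^ (ρ + lam) / jb (ξ₁ + ξ₂) ^ lam
        + jb (ξ₁ - ξ₃) ^ (ρ + lam) / jb (ξ₁ + ξ₃) ^ lam) := by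
    intro hb hc
    have hm : jb ξ₁ ≤ 3 * jb (ξ₁ - ξ₃) := by linarith
    have hd : jb (ξ₁ + ξ₃) ≤ 7 * jb (ξ₁ - ξ₃) := by linarith
    have hk := key ρ lam hρ hlam (jb ξ₁) (jb (ξ₁ - ξ₃)) (jb (ξ₁ + ξ₃)) h1 h1C h1E hm hd
    calc jb ξ₁ ^ ρ ≤ 3 ^ ρ * 7 ^ lam * (jb (ξ₁ - ξ₃) ^ (ρ + lam) / jb (ξ₁ + ξ₃) ^ lam) := hk
      _ ≤ _ := mul_le_mul_of_nonneg_left finish3 (by positivity)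
  rcases le_total (jb (ξ₁ - ξ₂)) (jb ξ) with hBA | hAB
  · rcases le_total (jb (ξ₁ - ξ₃)) (jb ξ) with hCA | hAC
    · -- jb ξ is max
      have hm : jb ξ₁ ≤ 3 * jb ξ := by linarith
      have hx : jb ξ₁ ^ ρ ≤ 3 ^ ρ * jb ξ ^ ρ := by
        rw [← Real.mul_rpow (by norm_num) (by linarith)]
        exact Real.rpow_le_rpow (by linarith) hm hρ
      have h7 : 3 ^ ρ * jb ξ ^ ρ ≤ 3 ^ ρ * 7 ^ lam * jb ξ ^ ρ := by
        nlinarith [mul_nonneg h3p.le hT1]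
      calc jb ξ₁ ^ ρ ≤ 3 ^ ρ * 7 ^ lam * jb ξ ^ ρ := by linarith
        _ ≤ _ := mul_le_mul_of_nonneg_left (by linarith) (by positivity)
    · exact case3 (by linarith) hAC
  · rcases le_total (jb (ξ₁ - ξ₃)) (jb (ξ₁ - ξ₂)) with hCB | hBC
    · -- jb (ξ₁ - ξ₂) is max
      have hm : jb ξ₁ ≤ 3 * jb (ξ₁ - ξ₂) := by linarith
      have hd : jb (ξ₁ + ξ₂) ≤ 7 * jb (ξ₁ - ξ₂) := by linarith
      have hk := key ρ lam hρ hlam (jb ξ₁) (jb (ξ₁ - ξ₂)) (jb (ξ₁ + ξ₂)) h1 h1B h1D hm hd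
      calc jb ξ₁ ^ ρ ≤ 3 ^ ρ * 7 ^ lam * (jb (ξ₁ - ξ₂) ^ (ρ + lam) / jb (ξ₁ + ξ₂) ^ lam) := hk
        _ ≤ _ := mul_le_mul_of_nonneg_left finish2 (by positivity)
    · exact case3 hBC (by linarith)
end

section
/- Let f_1^{(n)}(ξ,τ) = f_2^{(n)}(ξ,τ) = δ_{ξ,n} χ_{[-1,1]}(τ − n²) and f_3^{(n)}(ξ,τ) = δ_{ξ,−2n} χ_{[-1,1]}(τ − 4n²) for n ∈ ℕ, with ξ ∈ ℤ, τ ∈ ℝ. Then the threefold convolution satisfies (f_1^{(n)} * f_2^{(n)} * f_3^{(n)})(ξ,τ) ≥ δ_{ξ,0} χ_{[-1,1]}(τ − 6n²). -/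
open MeasureTheory

/-- Threefold convolution on `ℤ × ℝ`. -/
noncomputable def conv3 (f g h : ℤ × ℝ → ℝ) : ℤ × ℝ → ℝ := fun p =>
  ∑' ξ₁ : ℤ, ∑' ξ₂ : ℤ, ∫ τ₁ : ℝ, ∫ τ₂ : ℝ,
    f (ξ₁, τ₁) * g (ξ₂, τ₂) * h (p.1 - ξ₁ - ξ₂, p.2 - τ₁ - τ₂)

/-- `f₁^{(n)} = f₂^{(n)} = δ_{ξ,n} χ_{[-1,1]}(τ − n²)`. -/
noncomputable def f₁₂ (n : ℕ) : ℤ × ℝ → ℝ := fun p =>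
  (if p.1 = (n : ℤ) then 1 else 0) *
    (if p.2 - (n : ℝ) ^ 2 ∈ Set.Icc (-1 : ℝ) 1 then 1 else 0)

/-- `f₃^{(n)} = δ_{ξ,−2n} χ_{[-1,1]}(τ − 4n²)`. -/
noncomputable def f₃ (n : ℕ) : ℤ × ℝ → ℝ := fun p =>
  (if p.1 = -(2 * (n : ℤ)) then 1 else 0) *
    (if p.2 - 4 * (n : ℝ) ^ 2 ∈ Set.Icc (-1 : ℝ) 1 then 1 else 0)


/-! For `ξ = 0` both frequency sums collapse to `ξ₁ = ξ₂ = n`, and what is left is the value at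
`τ - 6n²` of the threefold convolution of `χ_{[-1,1]}` on `ℝ`, i.e. the area of the set of
`(τ₁, τ₂)` satisfying the three box constraints. For `|τ - 6n²| ≤ 1` that set contains a unit
square, so the area is at least `1`. -/

open Set

theorem conv3_nonneg {f g h : ℤ × ℝ → ℝ} (hf : 0 ≤ f) (hg : 0 ≤ g) (hh : 0 ≤ h)
    (p : ℤ × ℝ) : 0 ≤ conv3 f g h p :=
  tsum_nonneg fun _ => tsum_nonneg fun _ => integral_nonneg fun _ => integral_nonneg fun _ =>
    mul_nonneg (mul_nonneg (hf _) (hg _)) (hh _)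

theorem conv3_eq_of_concentrated {f g : ℤ × ℝ → ℝ} {a b : ℤ}
    (hf : ∀ ξ τ, ξ ≠ a → f (ξ, τ) = 0) (hg : ∀ ξ τ, ξ ≠ b → g (ξ, τ) = 0)
    (h : ℤ × ℝ → ℝ) (p : ℤ × ℝ) :
    conv3 f g h p =
      ∫ τ₁ : ℝ, ∫ τ₂ : ℝ, f (a, τ₁) * g (b, τ₂) * h (p.1 - a - b, p.2 - τ₁ - τ₂) := by
  unfold conv3
  rw [tsum_eq_single a fun ξ₁ hξ₁ => by simp [hf ξ₁ _ hξ₁],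
    tsum_eq_single b fun ξ₂ hξ₂ => by simp [hg ξ₂ _ hξ₂]]

theorem one_le_integral_integral_indicator_Icc_mul (a b c t : ℝ)
    (ht : t - a - b - c ∈ Icc (-1 : ℝ) 1) :
    1 ≤ ∫ u : ℝ, ∫ v : ℝ,
      (if u - a ∈ Icc (-1 : ℝ) 1 then (1 : ℝ) else 0) *
        (if v - b ∈ Icc (-1 : ℝ) 1 then 1 else 0) *
        (if t - u - v - c ∈ Icc (-1 : ℝ) 1 then 1 else 0) := by
  set s := t - a - b - c
  obtain ⟨hs₁, hs₂⟩ := ht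
  let S : Set (ℝ × ℝ) := {z | z.1 - a ∈ Icc (-1 : ℝ) 1 ∧ z.2 - b ∈ Icc (-1 : ℝ) 1 ∧
    t - z.1 - z.2 - c ∈ Icc (-1 : ℝ) 1}
  let Q : Set (ℝ × ℝ) :=
    Icc (a + (s - 1) / 2) (a + (s + 1) / 2) ×ˢ Icc (b + (s - 1) / 2) (b + (s + 1) / 2)
  have hS_meas : MeasurableSet S :=
    IsClosed.measurableSet <| (isClosed_Icc.preimage (by fun_prop)).inter
      ((isClosed_Icc.preimage (by fun_prop)).inter (isClosed_Icc.preimage (by fun_prop)))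
  have hS_bdd : S ⊆ Icc (a - 1) (a + 1) ×ˢ Icc (b - 1) (b + 1) := by
    rintro z ⟨⟨h₁, h₂⟩, ⟨h₃, h₄⟩, -⟩
    exact ⟨⟨by linarith, by linarith⟩, by linarith, by linarith⟩
  have hS_finite : volume S ≠ ⊤ :=
    ((isCompact_Icc.prod isCompact_Icc).measure_lt_top.trans_le' (measure_mono hS_bdd)).ne
  have hQS : Q ⊆ S := by
    rintro z ⟨⟨h₁, h₂⟩, h₃, h₄⟩
    exact ⟨⟨by linarith, by linarith⟩, ⟨by linarith, by linarith⟩, by linarith, by linarith⟩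
  have hQ_vol : volume.real Q = 1 := by
    have hside : (s + 1) / 2 - (s - 1) / 2 = 1 := by ring
    rw [Measure.volume_eq_prod, measureReal_prod_prod, Real.volume_real_Icc,
      Real.volume_real_Icc]
    norm_num [hside]
  have hS_indicator : ∀ u v : ℝ, (if u - a ∈ Icc (-1 : ℝ) 1 then (1 : ℝ) else 0) *
      (if v - b ∈ Icc (-1 : ℝ) 1 then 1 else 0) *
      (if t - u - v - c ∈ Icc (-1 : ℝ) 1 then 1 else 0) = S.indicator 1 (u, v) := by
    intro u v
    simp only [S, indicator_apply, mem_ofPred_eq, Pi.one_apply]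
    split_ifs <;> simp_all
  simp_rw [hS_indicator]
  rw [← integral_prod _ ((integrable_indicator_iff hS_meas).2 (integrableOn_const hS_finite)),
    ← Measure.volume_eq_prod, integral_indicator_one hS_meas, ← hQ_vol]
  exact measureReal_mono hQS hS_finite

theorem f₁₂_nonneg (n : ℕ) : 0 ≤ f₁₂ n := fun _ => by
  unfold f₁₂; positivity

theorem f₃_nonneg (n : ℕ) : 0 ≤ f₃ n := fun _ => by
  unfold f₃; positivity

/-- The threefold convolution satisfies
`(f₁^{(n)} * f₂^{(n)} * f₃^{(n)})(ξ,τ) ≥ δ_{ξ,0} χ_{[-1,1]}(τ − 6n²)`. -/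
theorem trilinear_convolution_lower_bound (n : ℕ) (p : ℤ × ℝ) :
    (if p.1 = 0 then 1 else 0) *
        (if p.2 - 6 * (n : ℝ) ^ 2 ∈ Set.Icc (-1 : ℝ) 1 then (1 : ℝ) else 0) ≤
      conv3 (f₁₂ n) (f₁₂ n) (f₃ n) p := by
  by_cases hp : p.1 = 0 ∧ p.2 - 6 * (n : ℝ) ^ 2 ∈ Icc (-1 : ℝ) 1
  · obtain ⟨hξ, hτ⟩ := hp
    have hconc : ∀ ξ τ, ξ ≠ (n : ℤ) → f₁₂ n (ξ, τ) = 0 := fun _ _ hne => by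
      simp [f₁₂, hne]
    have hfreq : p.1 - n - n = -(2 * (n : ℤ)) := by rw [hξ]; ring
    rw [if_pos hξ, if_pos hτ, one_mul, conv3_eq_of_concentrated hconc hconc, hfreq]
    simp only [f₁₂, f₃, if_true, one_mul]
    refine one_le_integral_integral_indicator_Icc_mul _ _ _ _ ?_
    convert hτ using 1
    ring
  · have hlhs : (if p.1 = 0 then 1 else 0) *
        (if p.2 - 6 * (n : ℝ) ^ 2 ∈ Icc (-1 : ℝ) 1 then (1 : ℝ) else 0) = 0 := by
      split_ifs <;> simp_all
    rw [hlhs]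
    exact conv3_nonneg (f₁₂_nonneg n) (f₁₂_nonneg n) (f₃_nonneg n) p
end
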